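/- For all positive integers a and b, there exists a unique nonnegative integer c such that the Twyst-off position (a,b,c) is a P position; moreover, this c satisfies c ≤ a + b + min(a,b) + 1. -/
import Mathlib



namespace TwystOff

/-- Contraction: merge the two neighbors of an interior zero stack; delete empty end stacks. -/
def contract : List ℕ → List ℕ
  | [] => []
  | a :: t =>
    if a = 0 then contract t
    else match t with
      | [] => [a]
      | [b] => if b = 0 then [a] else [a, b]
      | b :: c :: r => if b = 0 then contract ((a + c) :: r) else a :: contract (b :: c :: r)
termination_by l => l.length

theorem contract_sum (l : List ℕ) : (contract l).sum = l.sum := by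
  induction l using contract.induct <;> rw [contract.eq_def] <;> simp_all <;> omega

/-- A raw move: remove `k > 0` tiles from an end stack, or `k` tiles from each of two
consecutive stacks; the result is then contracted. -/
def premove (p q : List ℕ) : Prop :=
  (∃ a t k, p = a :: t ∧ 0 < k ∧ k ≤ a ∧ q = contract ((a - k) :: t)) ∨
  (∃ a t k, p = t ++ [a] ∧ 0 < k ∧ k ≤ a ∧ q = contract (t ++ [a - k])) ∨
  (∃ α a b β k, p = α ++ a :: b :: β ∧ 0 < k ∧ k ≤ a ∧ k ≤ b ∧
      q = contract (α ++ (a - k) :: (b - k) :: β))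

/-- Moves of Twyst-off (positions are considered up to contraction). -/
def Move (p q : List ℕ) : Prop := premove (contract p) q

theorem Move.sum_lt {p q : List ℕ} (h : Move p q) : q.sum < p.sum := by
  rw [← contract_sum p]
  rcases h with ⟨a, t, k, hp, hk, hka, hq⟩ | ⟨a, t, k, hp, hk, hka, hq⟩ |
    ⟨α, a, b, β, k, hp, hk, hka, hkb, hq⟩ <;>
    subst hq <;> rw [contract_sum, hp] <;> simp [List.sum_append] <;> omega

/-- P positions: every option is an N position (i.e. no option is itself P). -/
def PPos (p : List ℕ) : Prop := ∀ q, Move p q → ¬ PPos q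
termination_by p.sum
decreasing_by exact Move.sum_lt (by assumption)

/-- N positions: some option is a P position. -/
def NPos (p : List ℕ) : Prop := ∃ q, Move p q ∧ PPos q

end TwystOff


namespace TwystOff
theorem PPos_iff (p : List ℕ) : PPos p ↔ ∀ q, Move p q → ¬ PPos q := by
  rw [PPos]

theorem contract_nil' : contract [] = [] := by rw [contract.eq_def]

theorem contract1 (x : ℕ) : contract [x] = if x = 0 then [] else [x] := by
  rw [contract.eq_def]; split <;> simp_all [contract.eq_def]

theorem contract2 (x y : ℕ) :
    contract [x, y] = if x = 0 then contract [y] else if y = 0 then [x] else [x, y] := by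
  rw [contract.eq_def]

theorem contract3 (x y z : ℕ) :
    contract [x, y, z] = if x = 0 then contract [y, z]
      else if y = 0 then contract [x + z] else x :: contract [y, z] := by
  rw [contract.eq_def]

theorem ppos_congr {p q : List ℕ} (h : contract p = contract q) : PPos p ↔ PPos q := by
  rw [PPos_iff, PPos_iff]; unfold Move; rw [h]

theorem PPos_nil : PPos [] := by
  rw [PPos_iff]; intro q hq
  rcases hq with ⟨a, t, k, hp, _⟩ | ⟨a, t, k, hp, _⟩ | ⟨α, a, b, β, k, hp, _⟩ <;>
    simp [Move, contract_nil'] at hp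

theorem not_PPos_single {x : ℕ} (hx : 0 < x) : ¬ PPos [x] := by
  rw [PPos_iff]; push_neg
  refine ⟨[], ?_, PPos_nil⟩
  refine Or.inl ⟨x, [], x, ?_, hx, le_refl x, ?_⟩
  · simp only [contract1]
    simp
    omega
  · simp [contract1]

end TwystOff

namespace TwystOff

theorem ppos_contract2 {a y : ℕ} (ha : 0 < a) : PPos (contract [a, y]) ↔ PPos [a, y] := by
  apply ppos_congr
  by_cases hy : y = 0 <;> simp [contract2, contract1, ha.ne', hy]

theorem ppos_contract3 {a b c : ℕ} (ha : 0 < a) (hb : 0 < b) :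
    PPos (contract [a, b, c]) ↔ PPos [a, b, c] := by
  apply ppos_congr
  by_cases hc : c = 0 <;> simp [contract3, contract2, contract1, ha.ne', hb.ne', hc]

theorem move_col2 {a y k : ℕ} (ha : 0 < a) (hy : 0 < y) (hk : 0 < k) (hky : k ≤ y) :
    Move [a, y] (contract [a, y - k]) := by
  unfold Move
  refine Or.inr (Or.inl ⟨y, [a], k, ?_, hk, hky, rfl⟩)
  simp [contract2, ha.ne', hy.ne']

theorem move_col3 {a b c k : ℕ} (ha : 0 < a) (hb : 0 < b) (hc : 0 < c) (hk : 0 < k)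
    (hkc : k ≤ c) : Move [a, b, c] (contract [a, b, c - k]) := by
  unfold Move
  refine Or.inr (Or.inl ⟨c, [a, b], k, ?_, hk, hkc, rfl⟩)
  simp [contract3, contract2, ha.ne', hb.ne', hc.ne']

theorem unique2 {a y y' : ℕ} (ha : 0 < a) (h : PPos [a, y]) (h' : PPos [a, y']) : y = y' := by
  by_contra hne
  wlog hlt : y < y' generalizing y y'
  · exact this h' h (Ne.symm hne) (by omega)
  have hm := move_col2 ha (show 0 < y' by omega) (show 0 < y' - y by omega)
      (show y' - y ≤ y' by omega)
  rw [show y' - (y' - y) = y by omega] at hm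
  exact (PPos_iff [a, y']).mp h' _ hm ((ppos_contract2 ha).mpr h)

theorem unique3 {a b c c' : ℕ} (ha : 0 < a) (hb : 0 < b)
    (h : PPos [a, b, c]) (h' : PPos [a, b, c']) : c = c' := by
  by_contra hne
  wlog hlt : c < c' generalizing c c'
  · exact this h' h (Ne.symm hne) (by omega)
  have hm := move_col3 ha hb (show 0 < c' by omega) (show 0 < c' - c by omega)
      (show c' - c ≤ c' by omega)
  rw [show c' - (c' - c) = c by omega] at hm
  exact (PPos_iff [a, b, c']).mp h' _ hm ((ppos_contract3 ha hb).mpr h)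

end TwystOff

namespace TwystOff

theorem move3_elim {a b c : ℕ} {q : List ℕ} (ha : 0 < a) (hb : 0 < b) (hc : 0 < c)
    (h : Move [a, b, c] q) :
    (∃ k, 0 < k ∧ k < a ∧ q = [a - k, b, c]) ∨ q = [b, c] ∨
    (∃ k, 0 < k ∧ k < c ∧ q = [a, b, c - k]) ∨ q = [a, b] ∨
    (∃ k, 0 < k ∧ k < a ∧ k < b ∧ q = [a - k, b - k, c]) ∨
      (a < b ∧ q = [b - a, c]) ∨ (a = b ∧ q = [c]) ∨ (b < a ∧ q = [a - b + c]) ∨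
    (∃ k, 0 < k ∧ k < b ∧ k < c ∧ q = [a, b - k, c - k]) ∨
      (b ≤ c ∧ q = [a + (c - b)]) ∨ (c < b ∧ q = [a, b - c]) := by
  unfold Move at h
  rw [show contract [a, b, c] = [a, b, c] by
    simp [contract3, contract2, ha.ne', hb.ne', hc.ne']] at h
  rcases h with ⟨x, t, k, hp, hk, hka, hq⟩ | ⟨x, t, k, hp, hk, hka, hq⟩ |
      ⟨α, x, y, β, k, hp, hk, hkx, hky, hq⟩
  · -- left end
    obtain ⟨hx, ht⟩ : a = x ∧ [b, c] = t := by simpa using hp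
    subst hx; subst ht; subst hq
    rcases Nat.lt_or_ge k a with hka' | hka'
    · refine Or.inl ⟨k, hk, hka', ?_⟩
      simp [contract3, contract2, (show a - k ≠ 0 by omega), hb.ne', hc.ne']
    · refine Or.inr (Or.inl ?_)
      simp [contract3, contract2, (show a - k = 0 by omega), hb.ne', hc.ne']
  · -- right end
    rcases t with _ | ⟨t1, t⟩
    · simp at hp
    rcases t with _ | ⟨t2, t⟩
    · simp at hp
    rcases t with _ | ⟨t3, t⟩
    · obtain ⟨h1, h2, h3⟩ : a = t1 ∧ b = t2 ∧ c = x := by simpa using hp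
      subst h1; subst h2; subst h3; subst hq
      rcases Nat.lt_or_ge k c with hkc' | hkc'
      · refine Or.inr (Or.inr (Or.inl ⟨k, hk, hkc', ?_⟩))
        simp [contract3, contract2, ha.ne', hb.ne', (show c - k ≠ 0 by omega)]
      · refine Or.inr (Or.inr (Or.inr (Or.inl ?_)))
        simp [contract3, contract2, ha.ne', hb.ne', (show c - k = 0 by omega)]
    · exfalso
      have := congrArg List.length hp
      simp at this
  · -- two consecutive
    rcases α with _ | ⟨a1, α⟩
    · -- α = []
      obtain ⟨hx, hy, hβ⟩ : a = x ∧ b = y ∧ [c] = β := by simpa using hp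
      subst hx; subst hy; subst hβ; subst hq
      rcases Nat.lt_or_ge k a with hka' | hka'
      · rcases Nat.lt_or_ge k b with hkb' | hkb'
        · refine Or.inr (Or.inr (Or.inr (Or.inr (Or.inl ⟨k, hk, hka', hkb', ?_⟩))))
          simp [contract3, contract2, (show a - k ≠ 0 by omega),
            (show b - k ≠ 0 by omega), hc.ne']
        · -- k = b < a
          refine Or.inr (Or.inr (Or.inr (Or.inr (Or.inr (Or.inr (Or.inr (Or.inl
            ⟨by omega, ?_⟩)))))))
          simp [contract3, contract2, contract1, (show a - k ≠ 0 by omega),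
            (show b - k = 0 by omega), (show a - k + c ≠ 0 by omega)]
          omega
      · rcases Nat.lt_or_ge a b with hab | hab
        · -- k = a < b
          refine Or.inr (Or.inr (Or.inr (Or.inr (Or.inr (Or.inl ⟨hab, ?_⟩)))))
          simp [contract3, contract2, (show a - k = 0 by omega),
            (show b - k ≠ 0 by omega), hc.ne']
          omega
        · -- k = a = b
          refine Or.inr (Or.inr (Or.inr (Or.inr (Or.inr (Or.inr (Or.inl
            ⟨by omega, ?_⟩))))))
          simp [contract3, contract2, contract1, (show a - k = 0 by omega),
            (show b - k = 0 by omega), hc.ne']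
    · -- α = [a]
      obtain ⟨ha1, hrest⟩ : a = a1 ∧ [b, c] = α ++ x :: y :: β := by simpa using hp
      subst ha1
      rcases α with _ | ⟨a2, α⟩
      swap
      · exfalso
        have := congrArg List.length hrest
        simp at this
        omega
      obtain ⟨hx, hy, hβ⟩ : b = x ∧ c = y ∧ ([] : List ℕ) = β := by simpa using hrest
      subst hx; subst hy; subst hβ; subst hq
      rcases Nat.lt_or_ge k b with hkb' | hkb'
      · rcases Nat.lt_or_ge k c with hkc' | hkc'
        · refine Or.inr (Or.inr (Or.inr (Or.inr (Or.inr (Or.inr (Or.inr (Or.inr (Or.inl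
            ⟨k, hk, hkb', hkc', ?_⟩))))))))
          simp [contract3, contract2, ha.ne', (show b - k ≠ 0 by omega),
            (show c - k ≠ 0 by omega)]
        · -- k = c < b
          refine Or.inr (Or.inr (Or.inr (Or.inr (Or.inr (Or.inr (Or.inr (Or.inr (Or.inr
            (Or.inr ⟨by omega, ?_⟩)))))))))
          simp [contract3, contract2, ha.ne', (show b - k ≠ 0 by omega),
            (show c - k = 0 by omega)]
          omega
      · -- k = b ≤ c
        refine Or.inr (Or.inr (Or.inr (Or.inr (Or.inr (Or.inr (Or.inr (Or.inr (Or.inr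
          (Or.inl ⟨by omega, ?_⟩)))))))))
        simp [contract3, contract2, contract1, ha.ne', (show b - k = 0 by omega)]
        omega

end TwystOff

namespace TwystOff
open Classical in
noncomputable def g (a : ℕ) : ℕ := if h : ∃ y, PPos [a, y] then h.choose else 0

theorem g_spec {a y : ℕ} (ha : 0 < a) (h : PPos [a, y]) : y = g a := by
  have hex : ∃ y, PPos [a, y] := ⟨y, h⟩
  rw [g, dif_pos hex]
  exact unique2 ha h hex.choose_spec

open Classical in
noncomputable def f3 (a b : ℕ) : ℕ := if h : ∃ c, PPos [a, b, c] then h.choose else 0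

theorem f3_spec {a b c : ℕ} (ha : 0 < a) (hb : 0 < b) (h : PPos [a, b, c]) : c = f3 a b := by
  have hex : ∃ c, PPos [a, b, c] := ⟨c, h⟩
  rw [f3, dif_pos hex]
  exact unique3 ha hb h hex.choose_spec

noncomputable def S (a b : ℕ) : Finset ℕ :=
  ((Finset.Ico 1 a).image fun x => f3 x b) ∪ {g b} ∪
  ((Finset.Ico 1 (min a b)).image fun k => f3 (a - k) (b - k)) ∪ {g (b - a)} ∪
  ((Finset.Ico 1 b).image fun k => f3 a (b - k) + k) ∪ {b - g a}

theorem S_card (a b : ℕ) (ha : 0 < a) (hb : 0 < b) : (S a b).card ≤ a + b + min a b := by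
  have h1 : ((Finset.Ico 1 a).image fun x => f3 x b).card ≤ a - 1 :=
    le_trans Finset.card_image_le (by simp)
  have h2 : ((Finset.Ico 1 (min a b)).image fun k => f3 (a - k) (b - k)).card
      ≤ min a b - 1 := le_trans Finset.card_image_le (by simp)
  have h3 : ((Finset.Ico 1 b).image fun k => f3 a (b - k) + k).card ≤ b - 1 :=
    le_trans Finset.card_image_le (by simp)
  have e : (S a b).card ≤ a - 1 + 1 + (min a b - 1) + 1 + (b - 1) + 1 := by
    unfold S
    refine le_trans (Finset.card_union_le _ _) (add_le_add ?_ (by simp))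
    refine le_trans (Finset.card_union_le _ _) (add_le_add ?_ h3)
    refine le_trans (Finset.card_union_le _ _) (add_le_add ?_ (by simp))
    refine le_trans (Finset.card_union_le _ _) (add_le_add ?_ h2)
    exact le_trans (Finset.card_union_le _ _) (add_le_add h1 (by simp))
  omega
end TwystOff

namespace TwystOff

theorem key {a b c : ℕ} (ha : 0 < a) (hb : 0 < b) (hc : 0 < c) (hS : c ∉ S a b)
    (hlow : ∀ c' < c, ¬ PPos [a, b, c']) (hab : ¬ PPos [a, b]) : PPos [a, b, c] := by
  rw [PPos_iff]
  intro q hq hPq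
  rcases move3_elim ha hb hc hq with ⟨k, hk, hka, rfl⟩ | rfl | ⟨k, hk, hkc, rfl⟩ | rfl |
    ⟨k, hk, hka, hkb, rfl⟩ | ⟨hab', rfl⟩ | ⟨hab', rfl⟩ | ⟨hab', rfl⟩ |
    ⟨k, hk, hkb, hkc, rfl⟩ | ⟨hbc, rfl⟩ | ⟨hcb, rfl⟩
  · -- q = [a-k, b, c], k < a
    apply hS
    have := f3_spec (show 0 < a - k by omega) hb hPq
    refine Finset.mem_union_left _ (Finset.mem_union_left _ (Finset.mem_union_left _
      (Finset.mem_union_left _ (Finset.mem_union_left _ ?_))))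
    exact Finset.mem_image.mpr ⟨a - k, by simp; omega, this.symm⟩
  · -- q = [b, c]
    apply hS
    have := g_spec hb hPq
    refine Finset.mem_union_left _ (Finset.mem_union_left _ (Finset.mem_union_left _
      (Finset.mem_union_left _ (Finset.mem_union_right _ ?_))))
    simp [this]
  · -- q = [a, b, c-k]
    exact hlow _ (by omega) hPq
  · -- q = [a, b]
    exact hab hPq
  · -- q = [a-k, b-k, c]
    apply hS
    have := f3_spec (show 0 < a - k by omega) (show 0 < b - k by omega) hPq
    refine Finset.mem_union_left _ (Finset.mem_union_left _ (Finset.mem_union_left _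
      (Finset.mem_union_right _ ?_)))
    exact Finset.mem_image.mpr ⟨k, by simp; omega, this.symm⟩
  · -- q = [b-a, c], a < b
    apply hS
    have := g_spec (show 0 < b - a by omega) hPq
    refine Finset.mem_union_left _ (Finset.mem_union_left _ (Finset.mem_union_right _ ?_))
    simp [this]
  · -- q = [c], a = b
    exact not_PPos_single hc hPq
  · -- q = [a-b+c], b < a
    exact not_PPos_single (by omega) hPq
  · -- q = [a, b-k, c-k]
    apply hS
    have := f3_spec ha (show 0 < b - k by omega) hPq
    refine Finset.mem_union_left _ (Finset.mem_union_right _ ?_)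
    exact Finset.mem_image.mpr ⟨k, by simp; omega, by omega⟩
  · -- q = [a + (c-b)], b ≤ c
    exact not_PPos_single (by omega) hPq
  · -- q = [a, b-c], c < b
    apply hS
    have := g_spec ha hPq
    apply Finset.mem_union_right
    simp
    omega

end TwystOff

theorem exists_unique_c (a b : ℕ) (ha : 0 < a) (hb : 0 < b) :
    (∃! c : ℕ, TwystOff.PPos [a, b, c]) ∧
      ∀ c : ℕ, TwystOff.PPos [a, b, c] → c ≤ a + b + min a b + 1 := by
  open TwystOff in
  set M := a + b + min a b + 1 with hM
  have hexist : ∃ c, c ≤ M ∧ PPos [a, b, c] := by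
    by_contra h
    push_neg at h
    have hab : ¬ PPos [a, b] := by
      intro hp
      refine h 0 (by omega) ?_
      refine (ppos_congr (p := [a, b, 0]) (q := [a, b]) ?_).mpr hp
      simp [contract3, contract2, ha.ne', hb.ne']
    have hcard : (S a b).card < (Finset.Icc 1 M).card := by
      rw [Nat.card_Icc]
      have := S_card a b ha hb
      omega
    have hns : ¬ (Finset.Icc 1 M ⊆ S a b) := fun hsub =>
      absurd (Finset.card_le_card hsub) (by omega)
    obtain ⟨c, hcI, hcS⟩ := Finset.not_subset.mp hns
    rw [Finset.mem_Icc] at hcI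
    exact h c hcI.2 (key ha hb (by omega) hcS (fun c' hc' => h c' (by omega)) hab)
  obtain ⟨c0, hc0M, hc0⟩ := hexist
  exact ⟨⟨c0, hc0, fun y hy => TwystOff.unique3 ha hb hy hc0⟩,
    fun c hc => by rw [TwystOff.unique3 ha hb hc hc0]; exact hc0M⟩
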